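/- In a quadtree, a box at level l has at most 12 fine neighbors: boxes at level l+1 whose closures share a point with its closure. -/
import Mathlib


/-- The (closed) quadtree box at level `l` with integer index `m`: an axis-aligned square
of side `2^(-l)` with corners on the lattice `2^(-l) ℤ²`. -/
def quadBox (l : ℤ) (m : ℤ × ℤ) : Set (ℝ × ℝ) :=
  Set.Icc ((m.1 : ℝ) * (2 : ℝ) ^ (-l)) ((m.1 + 1 : ℝ) * (2 : ℝ) ^ (-l)) ×ˢ
  Set.Icc ((m.2 : ℝ) * (2 : ℝ) ^ (-l)) ((m.2 + 1 : ℝ) * (2 : ℝ) ^ (-l))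

private lemma dim_bounds {t : ℝ} (ht : 0 < t) {n a : ℤ} {x : ℝ}
    (h1 : (n:ℝ) * t ≤ x) (h2 : x ≤ ((n:ℝ)+1) * t)
    (h3 : (a:ℝ) * (2*t) ≤ x) (h4 : x ≤ ((a:ℝ)+1) * (2*t)) :
    2*a - 1 ≤ n ∧ n ≤ 2*a + 2 := by
  constructor
  · have : ((2*a - 1 : ℤ):ℝ) ≤ (n:ℝ) := by push_cast; nlinarith
    exact_mod_cast this
  · have : ((n:ℤ):ℝ) ≤ ((2*a + 2 : ℤ):ℝ) := by push_cast; nlinarith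
    exact_mod_cast this

private lemma dim_subset {t : ℝ} (ht : 0 ≤ t) {n a : ℤ}
    (h1 : 2*a ≤ n) (h2 : n ≤ 2*a+1) :
    Set.Icc ((n:ℝ)*t) (((n:ℝ)+1)*t) ⊆ Set.Icc ((a:ℝ)*(2*t)) (((a:ℝ)+1)*(2*t)) := by
  have hc1 : (2*(a:ℝ)) ≤ (n:ℝ) := by exact_mod_cast h1
  have hc2 : ((n:ℝ)) ≤ 2*(a:ℝ)+1 := by exact_mod_cast h2
  apply Set.Icc_subset_Icc <;> nlinarith

/-- A box at level `l` has at most 12 fine neighbors: boxes at level `l+1` (half the side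
length) not contained in it whose closures share a point with its closure. -/
theorem fine_neighbors_card_le_twelve (l : ℤ) (m : ℤ × ℤ) :
    {n : ℤ × ℤ | ¬ quadBox (l + 1) n ⊆ quadBox l m ∧
      (quadBox (l + 1) n ∩ quadBox l m).Nonempty}.Finite ∧
    {n : ℤ × ℤ | ¬ quadBox (l + 1) n ⊆ quadBox l m ∧
      (quadBox (l + 1) n ∩ quadBox l m).Nonempty}.ncard ≤ 12 := by
  have h2ne : (2:ℝ) ≠ 0 := by norm_num
  set t : ℝ := (2:ℝ) ^ (-(l+1)) with htdef
  have ht : 0 < t := by positivity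
  have h2 : (2:ℝ) ^ (-l) = 2 * t := by
    rw [htdef, mul_comm, ← zpow_add_one₀ h2ne, show -(l+1)+1 = -l by ring]
  set F : Finset (ℤ × ℤ) :=
    (Finset.Icc (2*m.1-1) (2*m.1+2) ×ˢ Finset.Icc (2*m.2-1) (2*m.2+2)) \
    (Finset.Icc (2*m.1) (2*m.1+1) ×ˢ Finset.Icc (2*m.2) (2*m.2+1)) with hF
  have hsub : {n : ℤ × ℤ | ¬ quadBox (l + 1) n ⊆ quadBox l m ∧
      (quadBox (l + 1) n ∩ quadBox l m).Nonempty} ⊆ ↑F := by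
    rintro n ⟨hns, p, hp1, hp2⟩
    simp only [quadBox, Set.mem_prod, Set.mem_Icc, h2, ← htdef] at hp1 hp2
    obtain ⟨⟨a1, a2⟩, b1, b2⟩ := hp1
    obtain ⟨⟨c1, c2⟩, d1, d2⟩ := hp2
    have hx := dim_bounds ht a1 a2 c1 c2
    have hy := dim_bounds ht b1 b2 d1 d2
    have hnotin : ¬(2*m.1 ≤ n.1 ∧ n.1 ≤ 2*m.1+1 ∧ 2*m.2 ≤ n.2 ∧ n.2 ≤ 2*m.2+1) := by
      rintro ⟨e1, e2, e3, e4⟩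
      apply hns
      simp only [quadBox, h2, ← htdef]
      exact Set.prod_mono (dim_subset ht.le e1 e2) (dim_subset ht.le e3 e4)
    simp only [hF, Finset.coe_sdiff, Set.mem_diff, Finset.coe_product,
      Set.mem_prod, Finset.mem_coe, Finset.mem_Icc]
    constructor
    · exact ⟨⟨hx.1, hx.2⟩, ⟨hy.1, hy.2⟩⟩
    · intro h
      exact hnotin ⟨h.1.1, h.1.2, h.2.1, h.2.2⟩
  have hfin : {n : ℤ × ℤ | ¬ quadBox (l + 1) n ⊆ quadBox l m ∧
      (quadBox (l + 1) n ∩ quadBox l m).Nonempty}.Finite :=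
    Set.Finite.subset F.finite_toSet hsub
  refine ⟨hfin, ?_⟩
  have hcard : F.card = 12 := by
    have hinner : (Finset.Icc (2*m.1) (2*m.1+1) ×ˢ Finset.Icc (2*m.2) (2*m.2+1)) ⊆
        (Finset.Icc (2*m.1-1) (2*m.1+2) ×ˢ Finset.Icc (2*m.2-1) (2*m.2+2)) :=
      Finset.product_subset_product (Finset.Icc_subset_Icc (by omega) (by omega))
        (Finset.Icc_subset_Icc (by omega) (by omega))
    rw [hF, Finset.card_sdiff_of_subset hinner, Finset.card_product, Finset.card_product,
      Int.card_Icc, Int.card_Icc, Int.card_Icc, Int.card_Icc,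
      show (2*m.1+2+1-(2*m.1-1)).toNat = 4 by omega,
      show (2*m.2+2+1-(2*m.2-1)).toNat = 4 by omega,
      show (2*m.1+1+1-(2*m.1)).toNat = 2 by omega,
      show (2*m.2+1+1-(2*m.2)).toNat = 2 by omega]
  calc _ ≤ (↑F : Set (ℤ × ℤ)).ncard := Set.ncard_le_ncard hsub F.finite_toSet
    _ = F.card := Set.ncard_coe_finset F
    _ ≤ 12 := by omega
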